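/- A tree T on n ≥ 2 vertices is well-covered if and only if it is square-stable. -/

import Mathlib

open SimpleGraph

/-- The square of a graph: vertices adjacent iff at distance 1 or 2 in `G`. -/
def SimpleGraph.sq {V : Type*} (G : SimpleGraph V) : SimpleGraph V where
  Adj u v := G.Adj u v ∨ (u ≠ v ∧ ∃ w, G.Adj u w ∧ G.Adj w v)
  symm := by
    constructor
    rintro u v (h | ⟨hne, w, h1, h2⟩)
    · exact Or.inl h.symm
    · exact Or.inr ⟨hne.symm, w, h2.symm, h1.symm⟩
  loopless := by
    constructor
    rintro u (h | ⟨hne, _⟩)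
    · exact G.irrefl h
    · exact hne rfl

/-- A stable (independent) set of vertices. -/
def SimpleGraph.IsStableSet {V : Type*} (G : SimpleGraph V) (s : Set V) : Prop :=
  s.Pairwise fun u v => ¬ G.Adj u v

/-- The stability (independence) number. -/
noncomputable def SimpleGraph.alpha {V : Type*} (G : SimpleGraph V) : ℕ :=
  sSup {n | ∃ s : Finset V, G.IsStableSet ↑s ∧ s.card = n}

/-- The matching number: maximum number of edges in a matching. -/
noncomputable def SimpleGraph.mu {V : Type*} (G : SimpleGraph V) : ℕ :=
  sSup {n | ∃ M : G.Subgraph, M.IsMatching ∧ M.edgeSet.ncard = n}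

/-- `s` is a maximum stable set. -/
def SimpleGraph.IsMaximumStable {V : Type*} (G : SimpleGraph V) (s : Finset V) : Prop :=
  G.IsStableSet ↑s ∧ s.card = G.alpha

/-- `s` is a maximal stable set. -/
def SimpleGraph.IsMaximalStable {V : Type*} (G : SimpleGraph V) (s : Finset V) : Prop :=
  G.IsStableSet ↑s ∧ ∀ v ∉ s, ¬ G.IsStableSet (insert v (↑s : Set V))

/-- `G` is square-stable if `α(G) = α(G²)`. -/
def SimpleGraph.SquareStable {V : Type*} (G : SimpleGraph V) : Prop :=
  G.alpha = G.sq.alpha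

/-- König-Egerváry graph: `α(G) + μ(G) = |V(G)|`. -/
def SimpleGraph.KonigEgervary {V : Type*} [Fintype V] (G : SimpleGraph V) : Prop :=
  G.alpha + G.mu = Fintype.card V

/-- A pendant vertex: a vertex of degree 1. -/
def SimpleGraph.Pendant {V : Type*} (G : SimpleGraph V) (v : V) : Prop :=
  (G.neighborSet v).ncard = 1

/-- `G` has a perfect matching consisting of pendant edges. -/
def SimpleGraph.HasPendantPerfectMatching {V : Type*} (G : SimpleGraph V) : Prop :=
  ∃ M : G.Subgraph, M.IsPerfectMatching ∧ ∀ e ∈ M.edgeSet, ∃ v ∈ e, G.Pendant v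

/-- A simplicial vertex: its neighborhood induces a clique. -/
def SimpleGraph.IsSimplicial {V : Type*} (G : SimpleGraph V) (v : V) : Prop :=
  G.IsClique (G.neighborSet v)

/-- `G` is well-covered: every maximal stable set is maximum. -/
def SimpleGraph.WellCovered {V : Type*} (G : SimpleGraph V) : Prop :=
  ∀ s : Finset V, G.IsMaximalStable s → s.card = G.alpha

/-- `G` is very well-covered: well-covered, no isolated vertices, `|V| = 2α`. -/
def SimpleGraph.VeryWellCovered {V : Type*} [Fintype V] (G : SimpleGraph V) : Prop :=
  G.WellCovered ∧ (∀ v : V, (G.neighborSet v).ncard ≠ 0) ∧ Fintype.card V = 2 * G.alpha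

/-!
Square-stable graphs are well-covered: a maximal stable set `S` dominates `G`, so sending each
vertex of a maximum stable set of `G²` to itself or to a neighbour in `S` is injective, whence
`α(G²) ≤ |S| ≤ α(G)`.

Conversely, let `G` be a well-covered forest. Two leaves with a common neighbour could replace it
in a maximal stable set, so no vertex carries two leaves. Every vertex of degree at least two is
adjacent to a leaf: the end `a` of a longest path `a - s - g - ⋯` is a leaf and `s` has degree two;
deleting `a` and `s` leaves a well-covered forest, to which induction applies, the only case not
inherited being a pendant path `a - s - g - v` with `v` not a leaf, which again allows a two-for-one
exchange. Hence a maximal `G²`-stable set of vertices of degree at most one is a maximal stable set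
of `G`, so it has `α(G)` elements and `α(G) ≤ α(G²)`.
-/

namespace SimpleGraph

variable {V : Type*} {G H : SimpleGraph V}

section Stable

lemma IsStableSet.anti (hGH : G ≤ H) {s : Set V} (hs : H.IsStableSet s) : G.IsStableSet s :=
  hs.mono' fun _ _ hnadj hadj => hnadj (hGH hadj)

lemma le_sq (G : SimpleGraph V) : G ≤ G.sq := fun _ _ => Or.inl

lemma isStableSet_singleton (v : V) : G.IsStableSet {v} :=
  Set.pairwise_singleton v _

lemma isStableSet_insert {s : Set V} {v : V} :
    G.IsStableSet (insert v s) ↔ G.IsStableSet s ∧ ∀ u ∈ s, ¬G.Adj v u := by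
  have : Std.Symm fun u w => ¬G.Adj u w := ⟨fun _ _ h hadj => h hadj.symm⟩
  refine Set.pairwise_insert_of_symm.trans (and_congr_right fun _ => ?_)
  exact forall₂_congr fun u _ => ⟨fun h hadj => h hadj.ne hadj, fun h _ => h⟩

lemma isMaximalStable_iff {s : Finset V} :
    G.IsMaximalStable s ↔ G.IsStableSet s ∧ ∀ v ∉ s, ∃ u ∈ s, G.Adj v u := by
  simp only [IsMaximalStable, isStableSet_insert, Finset.mem_coe]
  grind

lemma IsStableSet.exists_maximal_within {s U : Finset V} (hsU : s ⊆ U) (hs : G.IsStableSet s) :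
    ∃ t, s ⊆ t ∧ t ⊆ U ∧ G.IsStableSet t ∧ ∀ v ∈ U, v ∉ t → ∃ u ∈ t, G.Adj v u := by
  classical
  obtain ⟨t, hst, ht, htmax⟩ :=
    (U.powerset.filter fun t : Finset V => G.IsStableSet (t : Set V)).exists_le_maximal
      (Finset.mem_filter.2 ⟨Finset.mem_powerset.2 hsU, hs⟩)
  simp only [Finset.mem_filter, Finset.mem_powerset] at ht htmax
  refine ⟨t, hst, ht.1, ht.2, fun v hvU hvt => ?_⟩
  by_contra! hno
  have hins : insert v t ⊆ t := htmax
    ⟨Finset.insert_subset hvU ht.1, by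
      rw [Finset.coe_insert, isStableSet_insert]; exact ⟨ht.2, hno⟩⟩
    (Finset.subset_insert v t)
  exact hvt (hins (Finset.mem_insert_self v t))

lemma IsStableSet.exists_isMaximalStable_superset [Finite V] {s : Finset V}
    (hs : G.IsStableSet s) : ∃ t, G.IsMaximalStable t ∧ s ⊆ t := by
  have := Fintype.ofFinite V
  obtain ⟨t, hst, -, ht, hdom⟩ := hs.exists_maximal_within (Finset.subset_univ s)
  exact ⟨t, isMaximalStable_iff.2 ⟨ht, fun v hv => hdom v (Finset.mem_univ v) hv⟩, hst⟩

lemma alpha_eq_indepNum (G : SimpleGraph V) : G.alpha = G.indepNum := by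
  simp only [alpha, indepNum, isNIndepSet_iff]
  rfl

lemma exists_isStableSet_card_eq_alpha (G : SimpleGraph V) :
    ∃ s : Finset V, G.IsStableSet s ∧ s.card = G.alpha := by
  obtain ⟨s, hs, hcard⟩ := G.exists_isNIndepSet_indepNum
  exact ⟨s, hs, hcard.trans G.alpha_eq_indepNum.symm⟩

lemma IsStableSet.card_le_alpha [Finite V] {s : Finset V} (hs : G.IsStableSet s) :
    s.card ≤ G.alpha :=
  G.alpha_eq_indepNum ▸ IsIndepSet.card_le_indepNum hs

lemma alpha_anti [Finite V] (hGH : G ≤ H) : H.alpha ≤ G.alpha := by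
  obtain ⟨s, hs, hcard⟩ := H.exists_isStableSet_card_eq_alpha
  exact hcard ▸ (hs.anti hGH).card_le_alpha

end Stable

lemma adj_iff_of_neighborSet_eq {v u : V} {t : Set V} (h : G.neighborSet v = t) :
    G.Adj v u ↔ u ∈ t := by
  rw [← mem_neighborSet, h]

lemma neighborSet_deleteIncidenceSet_of_ne {s x : V} (hx : x ≠ s) :
    (G.deleteIncidenceSet s).neighborSet x = G.neighborSet x \ {s} := by
  ext u
  simp [deleteIncidenceSet_adj, hx]

lemma deleteIncidenceSet_lt {a s : V} (h : G.Adj a s) : G.deleteIncidenceSet s < G := by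
  refine lt_of_le_of_ne (G.deleteIncidenceSet_le s) fun hG => ?_
  have : (G.deleteIncidenceSet s).Adj a s := by rw [hG]; exact h
  exact (deleteIncidenceSet_adj.1 this).2.2 rfl

section WellCovered

variable [Finite V]

lemma WellCovered.card_le (hwc : G.WellCovered) {S T : Finset V} (hS : G.IsMaximalStable S)
    (hT : G.IsStableSet T) : T.card ≤ S.card :=
  hwc S hS ▸ hT.card_le_alpha

lemma WellCovered.of_forall_card_eq (k : ℕ) (h : ∀ S, G.IsMaximalStable S → S.card = k) :
    G.WellCovered := by
  classical
  obtain ⟨m, hm, hcard⟩ := G.exists_isStableSet_card_eq_alpha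
  have hmax : G.IsMaximalStable m := ⟨hm, fun v hv hins => by
    have := (Finset.coe_insert v m ▸ hins).card_le_alpha
    rw [Finset.card_insert_of_notMem hv] at this
    omega⟩
  intro S hS
  rw [h S hS, ← h m hmax, hcard]

/-- Otherwise `S` with `s` replaced by `x` and `y` would be a stable set larger than `S`. -/
lemma WellCovered.adj_of_exchange (hwc : G.WellCovered) {S : Finset V} {s x y : V}
    (hS : G.IsMaximalStable S) (hs : s ∈ S) (hx : x ∉ S) (hy : y ∉ S) (hxy : x ≠ y)
    (hxS : ∀ u ∈ S, G.Adj x u → u = s) (hyS : ∀ u ∈ S, G.Adj y u → u = s) : G.Adj x y := by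
  classical
  by_contra hnadj
  have hT : G.IsStableSet (insert x (insert y (S.erase s)) : Finset V) := by
    simp only [Finset.coe_insert, Finset.coe_erase, isStableSet_insert, Set.mem_insert_iff,
      Set.mem_sdiff, Finset.mem_coe, Set.mem_singleton_iff]
    refine ⟨⟨hS.1.mono Set.sdiff_subset, fun u hu hadj => hu.2 (hyS u hu.1 hadj)⟩, ?_⟩
    rintro u (rfl | hu) hadj
    · exact hnadj hadj
    · exact hu.2 (hxS u hu.1 hadj)
  have := hwc.card_le hS hT
  rw [Finset.card_insert_of_notMem (by simp [hxy, hx]),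
    Finset.card_insert_of_notMem (by simp [hy]), Finset.card_erase_of_mem hs] at this
  have := Finset.card_pos.2 ⟨s, hs⟩
  omega

lemma WellCovered.eq_of_neighborSet_eq_singleton (hwc : G.WellCovered) {s x y : V}
    (hx : G.neighborSet x = {s}) (hy : G.neighborSet y = {s}) : x = y := by
  have hN {z : V} (hz : G.neighborSet z = {s}) (u : V) : G.Adj z u ↔ u = s :=
    adj_iff_of_neighborSet_eq hz
  obtain ⟨S, hS, hsS⟩ :=
    (Finset.coe_singleton s ▸ isStableSet_singleton s : G.IsStableSet ({s} : Finset V))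
      |>.exists_isMaximalStable_superset
  have hsS : s ∈ S := hsS (Finset.mem_singleton_self s)
  have hnotin {z : V} (hz : G.neighborSet z = {s}) : z ∉ S := fun hzS =>
    hS.1 hzS hsS (G.ne_of_adj ((hN hz s).2 rfl)) ((hN hz s).2 rfl)
  by_contra hxy
  have := hwc.adj_of_exchange hS hsS (hnotin hx) (hnotin hy) hxy
    (fun u _ => (hN hx u).1) (fun u _ => (hN hy u).1)
  exact G.ne_of_adj ((hN hy s).2 rfl) ((hN hx y).1 this)

/-- Otherwise a maximal stable set through `s` and a second neighbour `w` of `v` could trade `s`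
for `a` and `g`. -/
lemma WellCovered.neighborSet_subsingleton_of_pendant_path (hwc : G.WellCovered) {a s g v : V}
    (ha : G.neighborSet a = {s}) (hs : G.neighborSet s = {a, g})
    (hg : G.neighborSet g \ {s} = {v}) : (G.neighborSet v).Subsingleton := by
  classical
  have hvs : v ≠ s := (hg.ge rfl).2
  have hsg : G.Adj g s := (adj_iff_of_neighborSet_eq hs).2 (Or.inr rfl) |>.symm
  have hg' : G.neighborSet g = {s, v} := by
    rw [← hg, Set.insert_sdiff_singleton, Set.insert_eq_of_mem (show s ∈ G.neighborSet g from hsg)]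
  have hNa (u : V) := adj_iff_of_neighborSet_eq (u := u) ha
  have hNs (u : V) := adj_iff_of_neighborSet_eq (u := u) hs
  have hNg (u : V) := adj_iff_of_neighborSet_eq (u := u) hg'
  simp only [Set.mem_insert_iff, Set.mem_singleton_iff] at hNa hNs hNg
  suffices h : ∀ w, G.Adj v w → w = g from fun x hx y hy => (h x hx).trans (h y hy).symm
  intro w hvw
  by_contra hwg
  have hsw : G.IsStableSet ({s, w} : Finset V) := by
    rw [Finset.coe_insert, Finset.coe_singleton, isStableSet_insert]
    refine ⟨isStableSet_singleton w, ?_⟩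
    simp only [Set.mem_singleton_iff, forall_eq, hNs]
    rintro (rfl | rfl)
    · exact hvs ((hNa v).1 hvw.symm)
    · exact hwg rfl
  obtain ⟨S, hS, hswS⟩ := hsw.exists_isMaximalStable_superset
  have hsS : s ∈ S := hswS (by simp)
  have hwS : w ∈ S := hswS (by simp)
  have hnotin {x : V} (hx : G.Adj x s) : x ∉ S := fun hxS => hS.1 hxS hsS hx.ne hx
  have hag : G.Adj a g := hwc.adj_of_exchange hS hsS (hnotin ((hNa s).2 rfl))
    (hnotin hsg) (fun h => hvs ((hNa v).1 (h ▸ (hNg v).2 (Or.inr rfl))))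
    (fun u _ => (hNa u).1)
    (fun u huS hgu => ((hNg u).1 hgu).resolve_right fun huv => hS.1 (huv ▸ huS) hwS hvw.ne hvw)
  exact G.irrefl ((hNa g).1 hag ▸ (hNs g).2 (Or.inr rfl))

/-- Isolating `s` stands in for deleting the leaf `a` together with `s`: both then lie in every
maximal stable set. -/
lemma WellCovered.deleteIncidenceSet (hwc : G.WellCovered) {a s : V}
    (ha : G.neighborSet a = {s}) : (G.deleteIncidenceSet s).WellCovered := by
  classical
  have has : G.Adj a s := (adj_iff_of_neighborSet_eq ha).2 rfl
  refine WellCovered.of_forall_card_eq (G.alpha + 1) fun M hM => ?_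
  rw [isMaximalStable_iff] at hM
  have hisol {x : V} (hx : ∀ u, ¬(G.deleteIncidenceSet s).Adj x u) : x ∈ M := by
    by_contra h
    obtain ⟨u, -, hu⟩ := hM.2 x h
    exact hx u hu
  have hsM : s ∈ M := hisol fun _ h => (deleteIncidenceSet_adj.1 h).2.1 rfl
  have haM : a ∈ M := hisol fun _ h =>
    (deleteIncidenceSet_adj.1 h).2.2
      ((adj_iff_of_neighborSet_eq ha).1 (deleteIncidenceSet_adj.1 h).1)
  have hmax : G.IsMaximalStable (M.erase s) := by
    refine isMaximalStable_iff.2 ⟨fun x hx y hy hne hadj => ?_, fun v hv => ?_⟩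
    · simp only [Finset.coe_erase, Set.mem_sdiff, Finset.mem_coe, Set.mem_singleton_iff] at hx hy
      exact hM.1 hx.1 hy.1 hne (deleteIncidenceSet_adj.2 ⟨hadj, hx.2, hy.2⟩)
    · by_cases hvs : v = s
      · exact ⟨a, Finset.mem_erase.2 ⟨has.ne, haM⟩, hvs ▸ has.symm⟩
      · obtain ⟨u, hu, hadj⟩ := hM.2 v fun h => hv (Finset.mem_erase.2 ⟨hvs, h⟩)
        obtain ⟨hadj, -, hus⟩ := deleteIncidenceSet_adj.1 hadj
        exact ⟨u, Finset.mem_erase.2 ⟨hus, hu⟩, hadj⟩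
  rw [← Finset.card_erase_add_one hsM, hwc _ hmax]

end WellCovered

section Forest

lemma IsAcyclic.neighborSet_eq_singleton_of_longest (hG : G.IsAcyclic) {a s b : V}
    (h : G.Adj a s) {p : G.Walk s b} (hp : (Walk.cons h p).IsPath)
    (hmax : ∀ (c d : V) (q : G.Walk c d), q.IsPath → q.length ≤ p.length + 1) :
    G.neighborSet a = {s} := by
  ext y
  simp only [mem_neighborSet, Set.mem_singleton_iff]
  refine ⟨fun hay => ?_, fun hy => hy ▸ h⟩
  by_cases hy : y ∈ (Walk.cons h p).support
  · simpa using hG.eq_snd_of_adj_start hp hay hy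
  · have := hmax _ _ _ ((Walk.cons_isPath_iff hay.symm _).2 ⟨hp, hy⟩)
    simp at this

variable [Finite V]

lemma exists_isPath_forall_length_le {u v : V} {p : G.Walk u v} (hp : p.IsPath) :
    ∃ (a b : V) (q : G.Walk a b), q.IsPath ∧ p.length ≤ q.length ∧
      ∀ (c d : V) (r : G.Walk c d), r.IsPath → r.length ≤ q.length := by
  have := Fintype.ofFinite V
  set S := {n | ∃ (a b : V) (q : G.Walk a b), q.IsPath ∧ q.length = n}
  have hbdd : BddAbove S := ⟨Fintype.card V, by rintro _ ⟨a, b, q, hq, rfl⟩; exact hq.length_lt.le⟩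
  obtain ⟨a, b, q, hq, hlen⟩ := Nat.sSup_mem (⟨_, u, v, p, hp, rfl⟩ : S.Nonempty) hbdd
  exact ⟨a, b, q, hq, hlen ▸ le_csSup hbdd ⟨u, v, p, hp, rfl⟩,
    fun c d r hr => hlen ▸ le_csSup hbdd ⟨c, d, r, hr, rfl⟩⟩

/-- `s` and `g` are the second and third vertices of a longest path. -/
lemma IsAcyclic.exists_adj_forall_adj_ne_neighborSet_eq (hG : G.IsAcyclic) {v : V}
    (hv : (G.neighborSet v).Nontrivial) :
    ∃ s g, G.Adj s g ∧ (∃ a, a ≠ g ∧ G.Adj s a) ∧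
      ∀ a, G.Adj s a → a ≠ g → G.neighborSet a = {s} := by
  obtain ⟨x, hx : G.Adj v x, y, hy : G.Adj v y, hxy⟩ := hv
  have hp : (Walk.cons hx.symm (Walk.cons hy Walk.nil)).IsPath := by
    simp [Walk.cons_isPath_iff, hxy, hx.ne', hy.ne]
  obtain ⟨a, b, q, hq, hlen, hmax⟩ := exists_isPath_forall_length_le hp
  cases q with
  | nil => simp at hlen
  | @cons _ s _ h₁ q =>
    cases q with
    | nil => simp at hlen
    | @cons _ g _ h₂ r =>
      have hq' := (Walk.cons_isPath_iff _ _).1 hq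
      refine ⟨s, g, h₂, ⟨a, fun hag => hq'.2 (by simp [hag]), h₁.symm⟩, fun a' ha' ha'g => ?_⟩
      have ha'r : a' ∉ (Walk.cons h₂ r).support := fun hmem =>
        ha'g (by simpa using hG.eq_snd_of_adj_start hq'.1 ha' hmem)
      exact hG.neighborSet_eq_singleton_of_longest ha'.symm
        ((Walk.cons_isPath_iff _ _).2 ⟨hq'.1, ha'r⟩) fun c d r' hr' => by
          simpa using hmax c d r' hr'


lemma IsAcyclic.exists_pendant_path_of_wellCovered (hG : G.IsAcyclic) (hwc : G.WellCovered)
    {v : V} (hv : (G.neighborSet v).Nontrivial) :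
    ∃ a s g, a ≠ g ∧ G.neighborSet a = {s} ∧ G.neighborSet s = {a, g} := by
  obtain ⟨s, g, hsg, ⟨a, hag, hsa⟩, hleaf⟩ := hG.exists_adj_forall_adj_ne_neighborSet_eq hv
  refine ⟨a, s, g, hag, hleaf a hsa hag, Set.ext fun z => ?_⟩
  simp only [mem_neighborSet, Set.mem_insert_iff, Set.mem_singleton_iff]
  refine ⟨fun hsz => ?_, by rintro (rfl | rfl) <;> assumption⟩
  by_cases hzg : z = g
  · exact Or.inr hzg
  · exact Or.inl (hwc.eq_of_neighborSet_eq_singleton (hleaf z hsz hzg) (hleaf a hsa hag))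

/-- Induction on `G`: there is a leaf `a` whose neighbour `s` has degree two, and isolating `s`
keeps `G` a well-covered forest. -/
theorem IsAcyclic.exists_neighborSet_eq_singleton (hG : G.IsAcyclic) (hwc : G.WellCovered) {v : V}
    (hv : (G.neighborSet v).Nontrivial) : ∃ l, G.neighborSet l = {v} := by
  induction G using WellFoundedLT.induction generalizing v with
  | _ G ih =>
  by_contra! hno
  obtain ⟨a, s, g, hag, ha, hs⟩ := hG.exists_pendant_path_of_wellCovered hwc hv
  have has : G.Adj a s := (adj_iff_of_neighborSet_eq ha).2 rfl
  have heq_g {x : V} (hxs : G.Adj x s) (hxa : x ≠ a) : x = g := by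
    have := (adj_iff_of_neighborSet_eq hs).1 hxs.symm
    simp only [Set.mem_insert_iff, Set.mem_singleton_iff] at this
    exact this.resolve_left hxa
  have hva : v ≠ a := by
    rintro rfl
    exact Set.not_nontrivial_singleton (ha ▸ hv)
  have hvs : v ≠ s := by
    rintro rfl
    exact hno a ha
  have hv' : ((G.deleteIncidenceSet s).neighborSet v).Nontrivial := by
    rw [neighborSet_deleteIncidenceSet_of_ne hvs]
    by_contra hsub
    rw [Set.not_nontrivial_iff] at hsub
    obtain ⟨w, hw, hws⟩ := hv.exists_ne s
    have hvs' : G.Adj v s := by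
      by_contra h
      rw [Set.sdiff_singleton_eq_self (show s ∉ G.neighborSet v from h)] at hsub
      exact hv.not_subsingleton hsub
    obtain rfl := heq_g hvs' hva
    refine hno w ((hwc.neighborSet_subsingleton_of_pendant_path ha hs
      (hsub.eq_singleton_of_mem ⟨hw, hws⟩)).eq_singleton_of_mem ?_)
    exact (G.adj_symm hw : G.Adj w _)
  obtain ⟨l, hl⟩ := ih _ (deleteIncidenceSet_lt has) (hG.anti (G.deleteIncidenceSet_le s))
    (hwc.deleteIncidenceSet ha) hv'
  have hls : l ≠ s := by
    rintro rfl
    exact (deleteIncidenceSet_adj.1 ((adj_iff_of_neighborSet_eq hl).2 rfl)).2.1 rfl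
  rw [neighborSet_deleteIncidenceSet_of_ne hls] at hl
  by_cases hlsadj : G.Adj l s
  · have hla : l ≠ a := by
      rintro rfl
      simp [ha] at hl
    obtain rfl := heq_g hlsadj hla
    exact hv.not_subsingleton (hwc.neighborSet_subsingleton_of_pendant_path ha hs hl)
  · rw [Set.sdiff_singleton_eq_self (show s ∉ G.neighborSet l from hlsadj)] at hl
    exact hno l hl

end Forest

section Square

lemma sq_adj_of_eq_or_adj {u x y : V} (hx : x = u ∨ G.Adj x u) (hy : y = u ∨ G.Adj y u)
    (hxy : x ≠ y) : G.sq.Adj x y := by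
  rcases hx with rfl | hx <;> rcases hy with rfl | hy
  · exact absurd rfl hxy
  · exact Or.inl hy.symm
  · exact Or.inl hx
  · exact Or.inr ⟨hxy, u, hx, hy.symm⟩

/-- Sending each vertex of a maximum stable set of `G²` to itself or to a neighbour in `S` is
injective, because two vertices in the closed neighbourhood of one vertex are adjacent in `G²`. -/
lemma IsMaximalStable.alpha_sq_le_card {S : Finset V} (hS : G.IsMaximalStable S) :
    G.sq.alpha ≤ S.card := by
  obtain ⟨P, hP, hPcard⟩ := G.sq.exists_isStableSet_card_eq_alpha
  have hdom (p : V) : ∃ u ∈ S, p = u ∨ G.Adj p u := by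
    by_cases hp : p ∈ S
    · exact ⟨p, hp, Or.inl rfl⟩
    · obtain ⟨u, hu, hpu⟩ := (isMaximalStable_iff.1 hS).2 p hp
      exact ⟨u, hu, Or.inr hpu⟩
  choose f hfS hf using hdom
  rw [← hPcard]
  refine Finset.card_le_card_of_injOn f (fun p _ => hfS p) fun p hp q hq hpq => ?_
  by_contra hne
  exact hP hp hq hne (sq_adj_of_eq_or_adj (hf p) (hpq ▸ hf q) hne)

variable [Finite V]

lemma SquareStable.wellCovered (h : G.SquareStable) : G.WellCovered := fun _ hS =>
  le_antisymm hS.1.card_le_alpha (h ▸ hS.alpha_sq_le_card)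

/-- A maximal `G²`-stable set of vertices of degree at most one: each remaining vertex is a leaf or
adjacent to a leaf, and no two leaves share a neighbour. -/
lemma IsAcyclic.exists_isMaximalStable_isStableSet_sq (hG : G.IsAcyclic) (hwc : G.WellCovered) :
    ∃ S, G.IsMaximalStable S ∧ G.sq.IsStableSet S := by
  classical
  have := Fintype.ofFinite V
  set L := Finset.univ.filter fun v => (G.neighborSet v).Subsingleton
  have hleaf {u w : V} (hu : u ∈ L) (huw : G.Adj u w) : G.neighborSet u = {w} :=
    (Finset.mem_filter.1 hu).2.eq_singleton_of_mem huw
  obtain ⟨S, -, hSL, hS, hdom⟩ :=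
    (by simp [IsStableSet] : G.sq.IsStableSet (∅ : Finset V)).exists_maximal_within L.empty_subset
  refine ⟨S, isMaximalStable_iff.2 ⟨hS.anti G.le_sq, fun v hvS => ?_⟩, hS⟩
  by_cases hvL : v ∈ L
  · obtain ⟨u, huS, hvu | ⟨hne, w, hvw, hwu⟩⟩ := hdom v hvL hvS
    · exact ⟨u, huS, hvu⟩
    · exact (hne (hwc.eq_of_neighborSet_eq_singleton (hleaf hvL hvw)
        (hleaf (hSL huS) hwu.symm))).elim
  · have hv : (G.neighborSet v).Nontrivial := Set.not_subsingleton_iff.1 (by simpa [L] using hvL)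
    obtain ⟨l, hl⟩ := hG.exists_neighborSet_eq_singleton hwc hv
    have hlL : l ∈ L := by simp [L, hl]
    by_cases hlS : l ∈ S
    · exact ⟨l, hlS, ((adj_iff_of_neighborSet_eq hl).2 rfl).symm⟩
    obtain ⟨u, huS, hlu | ⟨hne, w, hlw, hwu⟩⟩ := hdom l hlL hlS
    · exact (hvS ((adj_iff_of_neighborSet_eq hl).1 hlu ▸ huS)).elim
    · obtain rfl : w = v := (adj_iff_of_neighborSet_eq hl).1 hlw
      exact (hne (hwc.eq_of_neighborSet_eq_singleton hl (hleaf (hSL huS) hwu.symm))).elim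

theorem IsAcyclic.squareStable_of_wellCovered (hG : G.IsAcyclic) (hwc : G.WellCovered) :
    G.SquareStable := by
  obtain ⟨S, hS, hSsq⟩ := hG.exists_isMaximalStable_isStableSet_sq hwc
  exact le_antisymm (hwc S hS ▸ hSsq.card_le_alpha) (alpha_anti G.le_sq)

end Square

end SimpleGraph

theorem stmt14_general {V : Type*} [Fintype V] (T : SimpleGraph V) (ht : T.IsTree) :
    T.WellCovered ↔ T.SquareStable :=
  ⟨ht.isAcyclic.squareStable_of_wellCovered, SquareStable.wellCovered⟩

theorem stmt14 {V : Type*} [Fintype V] (T : SimpleGraph V) (ht : T.IsTree)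
    (h2 : 2 ≤ Fintype.card V) :
    T.WellCovered ↔ T.SquareStable :=
  stmt14_general T ht
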